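/- Let V ⊆ H with π(V) > 0 and Φ(V) > 0, let 0 < ρ̂ ≤ 1, and let x ∈ X and ρ ∈ (0,1] satisfy (π(V_x^+)/π(V))² · Φ(V_x^+) = (1−ρ)·Φ(V) and ρ ≤ ρ̂/2. Let Φ̂ be a real number with 0 < Φ̂ ≤ (1 + ρ̂/4)·Φ(V). If E consists of n pairs formed from 2n i.i.d. draws from π|_V, then Pr( (1/n)·ψ(E_x^+) ≤ (1 − ρ̂)·Φ̂ ) ≤ exp( − n·Φ̂·ρ̂² / 32 ). -/

import Mathlib

open MeasureTheory Finset

/-- `derr D pred h h'` is the hypothesis distance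
`d(h,h') = Pr_{x ~ D}(h(x) ≠ h'(x))`. -/
noncomputable def derr {X 𝓗 : Type*} [MeasurableSpace X] (D : Measure X)
    (pred : 𝓗 → X → Bool) (h h' : 𝓗) : ℝ :=
  (D {x | pred h x ≠ pred h' x}).toReal

/-- `pmass π V` is the probability mass `π(V)`. -/
noncomputable def pmass {𝓗 : Type*} (π : 𝓗 → ℝ) (V : Finset 𝓗) : ℝ :=
  ∑ h ∈ V, π h

/-- `avgDiam D pred π V` is the average diameter
`Φ(V) = E_{h,h' ~ π|_V}[d(h,h')]`. -/
noncomputable def avgDiam {X 𝓗 : Type*} [MeasurableSpace X] (D : Measure X)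
    (pred : 𝓗 → X → Bool) (π : 𝓗 → ℝ) (V : Finset 𝓗) : ℝ :=
  (∑ h ∈ V, ∑ h' ∈ V, π h * π h' * derr D pred h h') / (pmass π V) ^ 2

/-- `condw π V h` is the conditional probability `π|_V(h)`. -/
noncomputable def condw {𝓗 : Type*} [DecidableEq 𝓗] (π : 𝓗 → ℝ) (V : Finset 𝓗)
    (h : 𝓗) : ℝ :=
  if h ∈ V then π h / pmass π V else 0

/-! Under `π|_V × π|_V`, a pair contributes to `ψ(E_x^+)` the distance `d(h, h')` when both
lie in `V_x^+` and `0` otherwise: a `[0, 1]`-valued variable with mean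
`μ = (π(V_x^+)/π(V))² Φ(V_x^+) = (1 - ρ) Φ(V)`. So `ψ(E_x^+)` is a sum of `n` i.i.d. such
variables, and the multiplicative Chernoff lower tail `Pr(S/n ≤ a) ≤ exp(-n (μ - a)² / (2μ))`
applies with `a = (1 - ρ̂) Φ̂`. That tail bound is exponential Markov with tilt `l = (μ - a)/μ`,
using `e^{-lz} ≤ 1 - (1 - e^{-l}) z` on `[0, 1]` (convexity) and `e^{-l} ≤ 1 - l + l²/2`.
Finally `ρ ≤ ρ̂/2` and `Φ̂ ≤ (1 + ρ̂/4) Φ(V)` give `μ - a ≥ Φ(V) ρ̂ (1 + ρ̂)/4`, which makes the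
exponent at least `n Φ̂ ρ̂² / 32`. -/

namespace Real

theorem exp_neg_le_one_sub_add_sq_div_two {x : ℝ} (hx : 0 ≤ x) :
    exp (-x) ≤ 1 - x + x ^ 2 / 2 := by
  have hq : 0 < 1 - x + x ^ 2 / 2 := by nlinarith [sq_nonneg (x - 1)]
  rw [exp_neg, inv_le_iff_one_le_mul₀ (exp_pos x)]
  nlinarith [mul_le_mul_of_nonneg_right (quadratic_le_exp_of_nonneg hx) hq.le, sq_nonneg (x ^ 2)]

theorem exp_neg_mul_le_one_sub_mul {l z : ℝ} (hz0 : 0 ≤ z) (hz1 : z ≤ 1) :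
    exp (-l * z) ≤ 1 - (1 - exp (-l)) * z := by
  have h := convexOn_exp.2 (Set.mem_univ 0) (Set.mem_univ (-l)) (sub_nonneg.2 hz1) hz0
    (sub_add_cancel 1 z)
  simp only [smul_eq_mul, mul_zero, zero_add, exp_zero, mul_one] at h
  rw [mul_comm z] at h
  linarith

end Real

section Chernoff

variable {α : Type*} [Fintype α] {w f : α → ℝ}

theorem sum_mul_exp_neg_mul_le (hw0 : ∀ p, 0 ≤ w p) (hw1 : ∑ p, w p = 1)
    (hf0 : ∀ p, 0 ≤ f p) (hf1 : ∀ p, f p ≤ 1) (l : ℝ) :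
    ∑ p, w p * Real.exp (-l * f p) ≤ Real.exp (-(1 - Real.exp (-l)) * ∑ p, w p * f p) :=
  calc ∑ p, w p * Real.exp (-l * f p)
      ≤ ∑ p, w p * (1 - (1 - Real.exp (-l)) * f p) := by
        gcongr with p
        · exact hw0 p
        · exact Real.exp_neg_mul_le_one_sub_mul (hf0 p) (hf1 p)
    _ = ∑ p, w p - (1 - Real.exp (-l)) * ∑ p, w p * f p := by
        rw [mul_sum, ← sum_sub_distrib]
        exact sum_congr rfl fun p _ => by ring
    _ ≤ _ := by linarith [Real.add_one_le_exp (-(1 - Real.exp (-l)) * ∑ p, w p * f p)]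

theorem sum_ite_avg_le_exp_mul_pow (hw0 : ∀ p, 0 ≤ w p) (n : ℕ) {a l : ℝ} (hl : 0 ≤ l) :
    (∑ ω : Fin n → α, if 1 / (n : ℝ) * ∑ i, f (ω i) ≤ a then ∏ i, w (ω i) else 0)
      ≤ Real.exp (l * n * a) * (∑ p, w p * Real.exp (-l * f p)) ^ n := by
  rw [Fintype.sum_pow, mul_sum]
  gcongr with ω
  have hprod : 0 ≤ ∏ i, w (ω i) := prod_nonneg fun i _ => hw0 (ω i)
  rw [prod_mul_distrib, ← Real.exp_sum, ← mul_sum, mul_left_comm, ← Real.exp_add]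
  split_ifs with h
  · have hS : ∑ i, f (ω i) ≤ n * a := by
      rcases n.eq_zero_or_pos with rfl | hn
      · simp
      · rwa [one_div, inv_mul_le_iff₀ (by exact_mod_cast hn)] at h
    exact le_mul_of_one_le_right hprod (Real.one_le_exp (by nlinarith))
  · positivity

theorem chernoff_lower_tail (hw0 : ∀ p, 0 ≤ w p) (hw1 : ∑ p, w p = 1)
    (hf0 : ∀ p, 0 ≤ f p) (hf1 : ∀ p, f p ≤ 1) (n : ℕ) {a : ℝ}
    (hμ : 0 < ∑ p, w p * f p) (ha : a ≤ ∑ p, w p * f p) :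
    (∑ ω : Fin n → α, if 1 / (n : ℝ) * ∑ i, f (ω i) ≤ a then ∏ i, w (ω i) else 0)
      ≤ Real.exp (-(n * ((∑ p, w p * f p - a) ^ 2 / (2 * ∑ p, w p * f p)))) := by
  set μ := ∑ p, w p * f p
  -- the tilt minimising `l a - (l - l²/2) μ`, the exponent after `e^{-l} ≤ 1 - l + l²/2`
  set l := (μ - a) / μ
  have hl : 0 ≤ l := div_nonneg (sub_nonneg.2 ha) hμ.le
  have hexp : l * a - (1 - Real.exp (-l)) * μ ≤ -((μ - a) ^ 2 / (2 * μ)) := by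
    have h1 : l * a - (1 - Real.exp (-l)) * μ ≤ l * a - (l - l ^ 2 / 2) * μ := by
      nlinarith [Real.exp_neg_le_one_sub_add_sq_div_two hl]
    have h2 : l * a - (l - l ^ 2 / 2) * μ = -((μ - a) ^ 2 / (2 * μ)) := by
      simp only [l]
      field_simp
      ring
    linarith
  calc _ ≤ Real.exp (l * n * a) * (∑ p, w p * Real.exp (-l * f p)) ^ n :=
        sum_ite_avg_le_exp_mul_pow hw0 n hl
    _ ≤ Real.exp (l * n * a) * Real.exp (-(1 - Real.exp (-l)) * μ) ^ n := by
        gcongr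
        · exact sum_nonneg fun p _ => mul_nonneg (hw0 p) (Real.exp_pos _).le
        · exact sum_mul_exp_neg_mul_le hw0 hw1 hf0 hf1 l
    _ = Real.exp (n * (l * a - (1 - Real.exp (-l)) * μ)) := by
        rw [← Real.exp_nat_mul, ← Real.exp_add]; ring_nf
    _ ≤ _ := Real.exp_le_exp.2 <| by nlinarith [mul_le_mul_of_nonneg_left hexp n.cast_nonneg]

end Chernoff

section VersionSpace

variable {X 𝓗 : Type*} [MeasurableSpace X]

theorem derr_nonneg (D : Measure X) (pred : 𝓗 → X → Bool) (h h' : 𝓗) :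
    0 ≤ derr D pred h h' :=
  ENNReal.toReal_nonneg

theorem derr_le_one (D : Measure X) [IsProbabilityMeasure D] (pred : 𝓗 → X → Bool)
    (h h' : 𝓗) : derr D pred h h' ≤ 1 :=
  ENNReal.toReal_le_of_le_ofReal zero_le_one (by rw [ENNReal.ofReal_one]; exact prob_le_one)

theorem sq_pmass_mul_avgDiam (D : Measure X) (pred : 𝓗 → X → Bool) {π : 𝓗 → ℝ}
    {W : Finset 𝓗} (hπ : ∀ h ∈ W, 0 ≤ π h) :
    pmass π W ^ 2 * avgDiam D pred π W = ∑ h ∈ W, ∑ h' ∈ W, π h * π h' * derr D pred h h' := by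
  by_cases hW : pmass π W = 0
  · have hzero : ∀ h ∈ W, π h = 0 := (sum_eq_zero_iff_of_nonneg hπ).1 hW
    rw [hW, zero_pow two_ne_zero, zero_mul, eq_comm]
    exact sum_eq_zero fun h hh => by simp [hzero h hh]
  · rw [avgDiam, mul_div_cancel₀ _ (pow_ne_zero 2 hW)]

variable [DecidableEq 𝓗] {π : 𝓗 → ℝ} {V : Finset 𝓗}

theorem condw_nonneg (hπ : ∀ h, 0 ≤ π h) (h : 𝓗) : 0 ≤ condw π V h := by
  unfold condw
  split_ifs
  · exact div_nonneg (hπ h) (sum_nonneg fun h _ => hπ h)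
  · exact le_rfl

theorem sum_condw [Fintype 𝓗] (hV : pmass π V ≠ 0) : ∑ h, condw π V h = 1 := by
  simp only [condw, ← sum_filter, filter_mem_eq_inter, univ_inter, ← sum_div]
  exact div_self hV

theorem sum_condw_mul_condw [Fintype 𝓗] (hV : pmass π V ≠ 0) :
    ∑ p : 𝓗 × 𝓗, condw π V p.1 * condw π V p.2 = 1 := by
  rw [Fintype.sum_prod_type, ← sum_mul_sum, sum_condw hV, one_mul]

theorem sum_condw_mul_condw_mul_ite [Fintype 𝓗] (P : 𝓗 → Prop) [DecidablePred P]
    (g : 𝓗 → 𝓗 → ℝ) :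
    ∑ p : 𝓗 × 𝓗, condw π V p.1 * condw π V p.2 * (if P p.1 ∧ P p.2 then g p.1 p.2 else 0)
      = (∑ h ∈ V.filter P, ∑ h' ∈ V.filter P, π h * π h' * g h h') / pmass π V ^ 2 := by
  have hVP : V.filter P = univ.filter fun h => h ∈ V ∧ P h := by ext; simp
  rw [hVP, Fintype.sum_prod_type, sum_filter, sum_div]
  refine sum_congr rfl fun h _ => ?_
  simp only [sum_filter]
  split_ifs with hh
  · rw [sum_div]
    refine sum_congr rfl fun a _ => ?_
    by_cases ha : a ∈ V ∧ P a
    · simp only [condw, hh, ha, and_self, if_true]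
      ring
    · rw [if_neg ha, zero_div]
      by_cases haV : a ∈ V <;> simp_all [condw]
  · rw [zero_div]
    refine sum_eq_zero fun a _ => ?_
    by_cases hV : h ∈ V <;> simp_all [condw]

end VersionSpace

theorem split_gap_bound {A r ρ Φ : ℝ} (hA : 0 ≤ A) (hr1 : r ≤ 1) (hρr : ρ ≤ r / 2)
    (hΦ : Φ ≤ (1 + r / 4) * A) :
    A * r * (1 + r) / 4 ≤ (1 - ρ) * A - (1 - r) * Φ := by
  nlinarith [mul_le_mul_of_nonneg_left hΦ (sub_nonneg.2 hr1), mul_le_mul_of_nonneg_right hρr hA]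

theorem split_exponent_bound {A r ρ Φ : ℝ} (hA : 0 < A) (hr0 : 0 ≤ r) (hr1 : r ≤ 1)
    (hρ0 : 0 ≤ ρ) (hρr : ρ ≤ r / 2) (hΦ : Φ ≤ (1 + r / 4) * A) :
    Φ * r ^ 2 / 32 ≤ ((1 - ρ) * A - (1 - r) * Φ) ^ 2 / (2 * ((1 - ρ) * A)) := by
  have hgap := split_gap_bound hA.le hr1 hρr hΦ
  have hμ : 0 < (1 - ρ) * A := mul_pos (by linarith) hA
  rw [div_le_div_iff₀ (by norm_num) (by positivity)]
  calc Φ * r ^ 2 * (2 * ((1 - ρ) * A)) ≤ (1 + r / 4) * A * r ^ 2 * (2 * A) := by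
        gcongr
        nlinarith
    _ ≤ 32 * (A * r * (1 + r) / 4) ^ 2 := by
        nlinarith [sq_nonneg (A * r), mul_nonneg hr0 (sq_nonneg (A * r))]
    _ ≤ ((1 - ρ) * A - (1 - r) * Φ) ^ 2 * 32 := by
        rw [mul_comm]
        gcongr

theorem stmt_10_general {X 𝓗 : Type*} [MeasurableSpace X] [Fintype 𝓗] [DecidableEq 𝓗]
    (D : Measure X) [IsProbabilityMeasure D] (pred : 𝓗 → X → Bool)
    (π : 𝓗 → ℝ) (hπpos : ∀ h, 0 < π h)
    (V : Finset 𝓗) (hV : 0 < pmass π V) (hΦ : 0 < avgDiam D pred π V)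
    (rhat : ℝ) (hr0 : 0 < rhat) (hr1 : rhat ≤ 1)
    (x : X) (ρ : ℝ) (hρ0 : 0 < ρ)
    (hx : (pmass π (V.filter fun h => pred h x = true) / pmass π V) ^ 2
            * avgDiam D pred π (V.filter fun h => pred h x = true)
          = (1 - ρ) * avgDiam D pred π V)
    (hρr : ρ ≤ rhat / 2)
    (Φhat : ℝ)
    (hΦhat1 : Φhat ≤ (1 + rhat / 4) * avgDiam D pred π V)
    (n : ℕ) :
    (∑ ω : Fin n → 𝓗 × 𝓗,
        if (1 / (n : ℝ)) * (∑ i,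
              if pred (ω i).1 x = true ∧ pred (ω i).2 x = true
              then derr D pred (ω i).1 (ω i).2 else 0)
            ≤ (1 - rhat) * Φhat
        then ∏ i, condw π V (ω i).1 * condw π V (ω i).2 else 0)
      ≤ Real.exp (-((n : ℝ) * Φhat * rhat ^ 2) / 32) := by
  have hcondw := condw_nonneg (V := V) fun h => (hπpos h).le
  have hmean : ∑ p : 𝓗 × 𝓗, condw π V p.1 * condw π V p.2 *
      (if pred p.1 x = true ∧ pred p.2 x = true then derr D pred p.1 p.2 else 0)
        = (1 - ρ) * avgDiam D pred π V := by
    rw [sum_condw_mul_condw_mul_ite (fun h => pred h x = true),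
      ← sq_pmass_mul_avgDiam D pred fun h _ => (hπpos h).le, ← hx]
    ring
  have hgap := split_gap_bound hΦ.le hr1 hρr hΦhat1
  have hμ : 0 < (1 - ρ) * avgDiam D pred π V := mul_pos (by linarith) hΦ
  have ha : (1 - rhat) * Φhat ≤ (1 - ρ) * avgDiam D pred π V := by
    linarith [(by positivity : 0 ≤ avgDiam D pred π V * rhat * (1 + rhat) / 4)]
  have key := chernoff_lower_tail (w := fun p : 𝓗 × 𝓗 => condw π V p.1 * condw π V p.2)
      (f := fun p => if pred p.1 x = true ∧ pred p.2 x = true then derr D pred p.1 p.2 else 0)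
      (fun p => mul_nonneg (hcondw p.1) (hcondw p.2)) (sum_condw_mul_condw hV.ne')
      (fun p => by split_ifs; exacts [derr_nonneg D pred _ _, le_rfl])
      (fun p => by split_ifs; exacts [derr_le_one D pred _ _, zero_le_one])
      n (a := (1 - rhat) * Φhat) (hmean ▸ hμ) (hmean ▸ ha)
  refine key.trans (Real.exp_le_exp.2 ?_)
  rw [hmean]
  have hexp := mul_le_mul_of_nonneg_left
    (split_exponent_bound hΦ hr0.le hr1 hρ0.le hρr hΦhat1) n.cast_nonneg
  linarith

/-- if `x` exactly ρ-average splits `V` with `ρ ≤ ρ̂/2`, and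
`0 < Φ̂ ≤ (1 + ρ̂/4) Φ(V)`, then
`Pr((1/n) ψ(E_x^+) ≤ (1 - ρ̂) Φ̂) ≤ exp(-n Φ̂ ρ̂²/32)`,
where `E ~ (π|_V)^{2×n}` is written as a finite sum over outcomes. -/
theorem stmt_10 {X 𝓗 : Type*} [MeasurableSpace X] [Fintype 𝓗] [DecidableEq 𝓗]
    (D : Measure X) [IsProbabilityMeasure D] (pred : 𝓗 → X → Bool)
    (π : 𝓗 → ℝ) (hπpos : ∀ h, 0 < π h) (hπsum : ∑ h, π h = 1)
    (V : Finset 𝓗) (hV : 0 < pmass π V) (hΦ : 0 < avgDiam D pred π V)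
    (rhat : ℝ) (hr0 : 0 < rhat) (hr1 : rhat ≤ 1)
    (x : X) (ρ : ℝ) (hρ0 : 0 < ρ) (hρ1 : ρ ≤ 1)
    (hx : (pmass π (V.filter fun h => pred h x = true) / pmass π V) ^ 2
            * avgDiam D pred π (V.filter fun h => pred h x = true)
          = (1 - ρ) * avgDiam D pred π V)
    (hρr : ρ ≤ rhat / 2)
    (Φhat : ℝ) (hΦhat0 : 0 < Φhat)
    (hΦhat1 : Φhat ≤ (1 + rhat / 4) * avgDiam D pred π V)
    (n : ℕ) :
    (∑ ω : Fin n → 𝓗 × 𝓗,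
        if (1 / (n : ℝ)) * (∑ i,
              if pred (ω i).1 x = true ∧ pred (ω i).2 x = true
              then derr D pred (ω i).1 (ω i).2 else 0)
            ≤ (1 - rhat) * Φhat
        then ∏ i, condw π V (ω i).1 * condw π V (ω i).2 else 0)
      ≤ Real.exp (-((n : ℝ) * Φhat * rhat ^ 2) / 32) :=
  stmt_10_general D pred π hπpos V hV hΦ rhat hr0 hr1 x ρ hρ0 hx hρr Φhat hΦhat1 n
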